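/- Let f, g : 2^ω → ℝ be Baire 1 functions with |f|_α = |g|_α a limit ordinal. Then f ≤_m g (hence the class of Baire 1 functions of Bourgain rank equal to a fixed limit ordinal forms a single ≤_m-equivalence class). -/

import Mathlib

/-- Cantor space `2^ω`. -/
abbrev Cantor : Type := ℕ → Bool

/-- A bit `b` is a correct answer to the question `f A ≲_ε p`. -/
def CorrectAnswer (f : Cantor → ℝ) (A : Cantor) (p ε : ℚ) (b : Bool) : Prop :=
  (b = true ∧ f A < (p : ℝ) + (ε : ℝ)) ∨ (b = false ∧ (p : ℝ) - (ε : ℝ) < f A)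

/-- Topological m-reducibility `f ≤_m g`. -/
def MReducible (f g : Cantor → ℝ) : Prop :=
  ∀ p ε : ℚ, 0 < ε → ∃ q δ : ℚ, 0 < δ ∧ ∃ k : Cantor → Cantor, Continuous k ∧
    ∀ A b, CorrectAnswer g (k A) q δ b → CorrectAnswer f A p ε b

/-- `f` is Baire class 1: a pointwise limit of continuous functions. -/
def BaireOne (f : Cantor → ℝ) : Prop :=
  ∃ F : ℕ → Cantor → ℝ, (∀ n, Continuous (F n)) ∧
    ∀ A, Filter.Tendsto (fun n => F n A) Filter.atTop (nhds (f A))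

/-- The Bourgain derivation sequence `P^ν_{f,p,ε}`. -/
noncomputable def derivSeq (f : Cantor → ℝ) (p ε : ℚ) (ν : Ordinal.{0}) : Set Cantor :=
  Ordinal.limitRecOn ν Set.univ
    (fun _ P => P \ ⋃₀ {U : Set Cantor | IsOpen U ∧
        (f '' (P ∩ U) ⊆ Set.Iio ((p : ℝ) + (ε : ℝ)) ∨
         f '' (P ∩ U) ⊆ Set.Ioi ((p : ℝ) - (ε : ℝ)))})
    (fun o _ ih => ⋂ (μ : {μ : Ordinal.{0} // μ < o}), ih μ.1 μ.2)

/-- `α(f,p,ε)`: the least ordinal `ν` with `P^ν_{f,p,ε} = ∅`. -/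
noncomputable def bAlpha (f : Cantor → ℝ) (p ε : ℚ) : Ordinal.{0} :=
  sInf {ν | derivSeq f p ε ν = ∅}

/-- The Bourgain rank `|f|_α`. -/
noncomputable def bourgainRank (f : Cantor → ℝ) : Ordinal.{0} :=
  ⨆ x : ℚ × {ε : ℚ // 0 < ε}, bAlpha f x.1 x.2.1

/-!
Fix `p, ε` and let `a = α(f,p,ε)`. The sets `P^ν` are compact, so `a` is not a limit ordinal, hence
`a < |f|_α = |g|_α` and some `P^a_{g,q,δ}` contains a point `y`; that `P^ν_{f,p,ε}` eventually
vanishes is the Baire category theorem.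

By induction on `ν`, a closed set disjoint from `P^ν_{f,p,ε}` reduces continuously into any
neighbourhood of any `y ∈ P^ν_{g,q,δ}`. A point of the set leaves the derivation at a stage
`r + 1 ≤ ν` through a neighbourhood on which `f` is one-sided on `P^r_{f,p,ε}`, and since
`y ∈ P^{r+1}_{g,q,δ}`, there is `z ∈ P^r_{g,q,δ}` near `y` with `g z` strictly on the same side. Send
`P^r_{f,p,ε}` to `z` and reduce the open rest of the neighbourhood by the case `r` into ever smaller
cylinders around `z`, so that the map stays continuous at `P^r_{f,p,ε}`. Finitely many such local
reductions cover the compact space and glue along cylinders.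
-/

open Set PiNat Filter Topology

section CorrectAnswer

variable {f g : Cantor → ℝ} {A z : Cantor} {p ε q δ : ℚ}

@[simp]
lemma correctAnswer_true : CorrectAnswer f A p ε true ↔ f A < p + ε := by
  simp [CorrectAnswer]

@[simp]
lemma correctAnswer_false : CorrectAnswer f A p ε false ↔ p - ε < f A := by
  simp [CorrectAnswer]

def ReducesAt (f g : Cantor → ℝ) (p ε q δ : ℚ) (A z : Cantor) : Prop :=
  ∀ b, CorrectAnswer g z q δ b → CorrectAnswer f A p ε b

lemma reducesAt_of_correctAnswer {s : Bool} (hf : CorrectAnswer f A p ε s)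
    (hg : ¬CorrectAnswer g z q δ !s) : ReducesAt f g p ε q δ A z := by
  intro b hb
  cases b <;> cases s <;> simp_all

end CorrectAnswer

section DerivSeq

variable {f : Cantor → ℝ} {p ε : ℚ} {ν : Ordinal.{0}} {A : Cantor}

lemma derivSeq_zero (f : Cantor → ℝ) (p ε : ℚ) : derivSeq f p ε 0 = univ :=
  Ordinal.limitRecOn_zero ..

lemma derivSeq_add_one (f : Cantor → ℝ) (p ε : ℚ) (ν : Ordinal.{0}) :
    derivSeq f p ε (ν + 1) =
      derivSeq f p ε ν \ ⋃₀ {U : Set Cantor | IsOpen U ∧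
        (f '' (derivSeq f p ε ν ∩ U) ⊆ Iio ((p : ℝ) + (ε : ℝ)) ∨
         f '' (derivSeq f p ε ν ∩ U) ⊆ Ioi ((p : ℝ) - (ε : ℝ)))} :=
  Ordinal.limitRecOn_add_one ..

lemma derivSeq_of_isSuccLimit (f : Cantor → ℝ) (p ε : ℚ) (h : Order.IsSuccLimit ν) :
    derivSeq f p ε ν = ⋂ μ : {μ : Ordinal.{0} // μ < ν}, derivSeq f p ε μ :=
  Ordinal.limitRecOn_limit _ _ _ _ h

lemma mem_derivSeq_add_one :
    A ∈ derivSeq f p ε (ν + 1) ↔ A ∈ derivSeq f p ε ν ∧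
      ∀ U, IsOpen U → A ∈ U → ∀ s, ∃ x ∈ derivSeq f p ε ν ∩ U, ¬CorrectAnswer f x p ε s := by
  simp only [derivSeq_add_one, Set.mem_sdiff, mem_sUnion, mem_ofPred_eq, image_subset_iff]
  refine and_congr_right fun _ => ⟨fun h U hU hAU s => ?_, fun h ⟨U, ⟨hU, hside⟩, hAU⟩ => ?_⟩
  · by_contra! hs
    exact h ⟨U, ⟨hU, by cases s <;> [right; left] <;> exact fun x hx => by simpa using hs x hx⟩, hAU⟩
  · rcases hside with hside | hside
    · obtain ⟨x, hx, hx'⟩ := h U hU hAU true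
      exact hx' (by simpa using hside hx)
    · obtain ⟨x, hx, hx'⟩ := h U hU hAU false
      exact hx' (by simpa using hside hx)

lemma isClosed_derivSeq (f : Cantor → ℝ) (p ε : ℚ) (ν : Ordinal.{0}) :
    IsClosed (derivSeq f p ε ν) := by
  induction ν using Ordinal.limitRecOn with
  | zero => simp [derivSeq_zero]
  | add_one ν ih =>
    rw [derivSeq_add_one]
    exact ih.sdiff (isOpen_sUnion fun U hU => hU.1)
  | limit ν hν ih =>
    rw [derivSeq_of_isSuccLimit f p ε hν]
    exact isClosed_iInter fun μ => ih μ μ.2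

lemma derivSeq_add_one_subset (f : Cantor → ℝ) (p ε : ℚ) (ν : Ordinal.{0}) :
    derivSeq f p ε (ν + 1) ⊆ derivSeq f p ε ν := by
  rw [derivSeq_add_one]
  exact sdiff_subset

lemma antitone_derivSeq (f : Cantor → ℝ) (p ε : ℚ) : Antitone (derivSeq f p ε) := by
  intro μ ν hμν
  induction ν using Ordinal.limitRecOn with
  | zero => rw [nonpos_iff_eq_zero.1 hμν]
  | add_one ν ih =>
    rcases hμν.lt_or_eq with hlt | rfl
    · exact (derivSeq_add_one_subset f p ε ν).trans (ih (Order.lt_add_one_iff.1 hlt))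
    · rfl
  | limit ν hν ih =>
    rcases hμν.lt_or_eq with hlt | rfl
    · rw [derivSeq_of_isSuccLimit f p ε hν]
      exact iInter_subset_of_subset ⟨μ, hlt⟩ subset_rfl
    · rfl

lemma exists_oneSided_of_notMem_derivSeq (hA : A ∉ derivSeq f p ε ν) :
    ∃ r < ν, ∃ U, IsOpen U ∧ A ∈ U ∧ ∃ s, ∀ x ∈ derivSeq f p ε r ∩ U, CorrectAnswer f x p ε s := by
  induction ν using Ordinal.limitRecOn with
  | zero => simp [derivSeq_zero] at hA
  | add_one ν ih =>
    by_cases hAν : A ∈ derivSeq f p ε ν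
    · have := mt mem_derivSeq_add_one.2 hA
      push Not at this
      obtain ⟨U, hU, hAU, s, hs⟩ := this hAν
      exact ⟨ν, Order.lt_add_one_iff.2 le_rfl, U, hU, hAU, s, hs⟩
    · obtain ⟨r, hr, hU⟩ := ih hAν
      exact ⟨r, hr.trans (Order.lt_add_one_iff.2 le_rfl), hU⟩
  | limit ν hν ih =>
    rw [derivSeq_of_isSuccLimit f p ε hν, mem_iInter] at hA
    push Not at hA
    obtain ⟨⟨μ, hμ⟩, hAμ⟩ := hA
    obtain ⟨r, hr, hU⟩ := ih μ hμ hAμ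
    exact ⟨r, hr.trans hμ, hU⟩

end DerivSeq

namespace Cantor

lemma exists_cylinder_subset {V : Set Cantor} {A : Cantor} (hV : V ∈ 𝓝 A) :
    ∃ n, cylinder A n ⊆ V := by
  obtain ⟨u, ⟨x, n, rfl⟩, hAu, huV⟩ :=
    (isTopologicalBasis_cylinders fun _ : ℕ => Bool).mem_nhds_iff.1 hV
  exact ⟨n, by rwa [mem_cylinder_iff_eq.1 hAu]⟩

/-- Lebesgue number lemma for Cantor space. -/
lemma exists_forall_cylinder_subset (U : Cantor → Set Cantor) (hU : ∀ A, U A ∈ 𝓝 A) :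
    ∃ N, ∀ B, ∃ A, cylinder B N ⊆ U A := by
  choose n hn using fun A => exists_cylinder_subset (hU A)
  obtain ⟨t, ht⟩ := isCompact_univ.elim_finite_subcover (fun A => cylinder A (n A))
    (fun A => isOpen_cylinder _ _ _) fun B _ => mem_iUnion.2 ⟨B, self_mem_cylinder B _⟩
  refine ⟨t.sup n, fun B => ?_⟩
  obtain ⟨A, hAt, hBA⟩ := mem_iUnion₂.1 (ht (mem_univ B))
  refine ⟨A, (cylinder_anti B (Finset.le_sup hAt)).trans ?_⟩
  rw [mem_cylinder_iff_eq.1 hBA]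
  exact hn A

lemma exists_continuous_of_forall_nhds {Y : Type*} [TopologicalSpace Y] {Φ : Cantor → Y → Prop}
    (h : ∀ A, ∃ U ∈ 𝓝 A, ∃ k : Cantor → Y, Continuous k ∧ ∀ B ∈ U, Φ B (k B)) :
    ∃ k : Cantor → Y, Continuous k ∧ ∀ A, Φ A (k A) := by
  choose U hU k hk hΦ using h
  obtain ⟨N, hN⟩ := exists_forall_cylinder_subset U hU
  choose a ha using hN
  let trunc : Cantor → Cantor := fun B i => if i < N then B i else false
  have htrunc {B B' : Cantor} (h : B' ∈ cylinder B N) : trunc B' = trunc B := by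
    ext i; simp only [trunc]; split_ifs with hi; exacts [h i hi, rfl]
  have hcyl (B : Cantor) : B ∈ cylinder (trunc B) N := fun i hi => by simp [trunc, hi]
  refine ⟨fun B => k (a (trunc B)) B, continuous_iff_continuousAt.2 fun B => ?_,
    fun B => hΦ _ _ (ha _ (hcyl B))⟩
  refine (hk (a (trunc B))).continuousAt.congr (eventuallyEq_of_mem
    ((isOpen_cylinder _ B N).mem_nhds (self_mem_cylinder B N)) fun B' hB' => ?_)
  simp only [htrunc hB']

lemma isClosed_cylinder (A : Cantor) (n : ℕ) : IsClosed (cylinder A n) := by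
  rw [cylinder_eq_pi]
  exact isClosed_set_pi fun _ _ => isClosed_discrete _

/-- The largest cylinder around `A` inside `W` has length `cylinderDepth W A` (junk `0` if there
is none). -/
noncomputable def cylinderDepth (W : Set Cantor) (A : Cantor) : ℕ :=
  sInf {n | cylinder A n ⊆ W}

variable {W : Set Cantor} {A B : Cantor}

lemma cylinder_cylinderDepth_subset (hW : IsOpen W) (hA : A ∈ W) :
    cylinder A (cylinderDepth W A) ⊆ W :=
  Nat.sInf_mem (exists_cylinder_subset (hW.mem_nhds hA))

lemma cylinderDepth_le {n : ℕ} (h : cylinder A n ⊆ W) : cylinderDepth W A ≤ n :=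
  Nat.sInf_le h

lemma cylinderDepth_eq_of_mem_cylinder (hW : IsOpen W) (hA : A ∈ W)
    (hB : B ∈ cylinder A (cylinderDepth W A)) : cylinderDepth W B = cylinderDepth W A := by
  have hBA := mem_cylinder_iff_eq.1 hB
  have hle : cylinderDepth W B ≤ cylinderDepth W A :=
    cylinderDepth_le (hBA ▸ cylinder_cylinderDepth_subset hW hA)
  refine le_antisymm hle (cylinderDepth_le ?_)
  rw [← mem_cylinder_iff_eq.1 (cylinder_anti A hle hB)]
  exact cylinder_cylinderDepth_subset hW (cylinder_cylinderDepth_subset hW hA hB)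

lemma lt_cylinderDepth_of_notMem (hW : IsOpen W) {n : ℕ} (hA : A ∉ W) (hB : B ∈ W)
    (hAB : B ∈ cylinder A n) : n < cylinderDepth W B := by
  by_contra! h
  exact hA (cylinder_cylinderDepth_subset hW hB (cylinder_anti B h ((mem_cylinder_comm A B n).1 hAB)))

lemma exists_continuous_of_isOpen (hW : IsOpen W) (y : Cantor) {Φ : Cantor → Cantor → Prop}
    (h : ∀ V, IsClosed V → V ⊆ W → ∀ m, ∃ k : Cantor → Cantor, Continuous k ∧
      (∀ A, k A ∈ cylinder y m) ∧ ∀ A ∈ V, Φ A (k A)) (m : ℕ) :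
    ∃ k : Cantor → Cantor, Continuous k ∧ (∀ A, k A ∈ cylinder y m) ∧
      (∀ A ∈ W, Φ A (k A)) ∧ ∀ A ∉ W, k A = y := by
  classical
  choose! kk hkc hky hkΦ using h
  set n := cylinderDepth W
  -- precision `n A` makes `k` tend to `y` at the boundary of `W`
  let k A := if A ∈ W then kk (cylinder A (n A)) (max m (n A)) A else y
  have hV {A : Cantor} (hA : A ∈ W) := cylinder_cylinderDepth_subset hW hA
  have hkc' {A : Cantor} (hA : A ∈ W) (j : ℕ) := hkc _ (isClosed_cylinder A (n A)) (hV hA) j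
  have hky' {A : Cantor} (hA : A ∈ W) (j : ℕ) := hky _ (isClosed_cylinder A (n A)) (hV hA) j
  have hk {A B : Cantor} (hA : A ∈ W) (hB : B ∈ cylinder A (n A)) :
      k B = kk (cylinder A (n A)) (max m (n A)) B := by
    have hnB : n B = n A := cylinderDepth_eq_of_mem_cylinder hW hA hB
    simp only [k, if_pos (hV hA hB), hnB, mem_cylinder_iff_eq.1 hB]
  refine ⟨k, continuous_iff_continuousAt.2 fun A => ?_, fun A => ?_,
    fun A hA => ?_, fun A hA => if_neg hA⟩
  · by_cases hA : A ∈ W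
    · refine (hkc' hA (max m (n A))).continuousAt.congr ?_
      exact eventuallyEq_of_mem ((isOpen_cylinder _ A _).mem_nhds (self_mem_cylinder A _))
        fun B hB => (hk hA hB).symm
    · rw [ContinuousAt, show k A = y from if_neg hA]
      refine tendsto_pi_nhds.2 fun i => tendsto_nhds_of_eventually_eq ?_
      filter_upwards [(isOpen_cylinder _ A i).mem_nhds (self_mem_cylinder A i)] with B hB
      by_cases hBW : B ∈ W
      · simp only [k, if_pos hBW]
        exact hky' hBW _ B i
          ((lt_cylinderDepth_of_notMem hW hA hBW hB).trans_le (le_max_right _ _))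
      · simp only [k, if_neg hBW]
  · by_cases hA : A ∈ W
    · simp only [k, if_pos hA]
      exact cylinder_anti y (le_max_left _ _) (hky' hA _ A)
    · simp only [k, if_neg hA]
      exact self_mem_cylinder y m
  · rw [hk hA (self_mem_cylinder A _)]
    exact hkΦ _ (isClosed_cylinder A _) (hV hA) _ A (self_mem_cylinder A _)

end Cantor

section Reduction

variable (f g : Cantor → ℝ) (p ε q δ : ℚ)

def ReducibleAtLevel (ν : Ordinal.{0}) : Prop :=
  ∀ S, IsClosed S → Disjoint S (derivSeq f p ε ν) → ∀ y ∈ derivSeq g q δ ν, ∀ m,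
    ∃ k : Cantor → Cantor, Continuous k ∧ (∀ A, k A ∈ cylinder y m) ∧
      ∀ A ∈ S, ReducesAt f g p ε q δ A (k A)

variable {f g p ε q δ} {ν : Ordinal.{0}}

lemma ReducibleAtLevel.exists_reduction_of_oneSided (hν : ReducibleAtLevel f g p ε q δ ν)
    {S : Set Cantor} (hS : IsOpen S) {s : Bool}
    (hf : ∀ x ∈ derivSeq f p ε ν ∩ S, CorrectAnswer f x p ε s) {y : Cantor}
    (hy : y ∈ derivSeq g q δ ν) (hgy : ¬CorrectAnswer g y q δ !s) (m : ℕ) :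
    ∃ k : Cantor → Cantor, Continuous k ∧ (∀ A, k A ∈ cylinder y m) ∧
      ∀ A ∈ S, ReducesAt f g p ε q δ A (k A) := by
  obtain ⟨k, hk, hky, hW, hWc⟩ :=
    Cantor.exists_continuous_of_isOpen (hS.sdiff (isClosed_derivSeq f p ε ν)) y
      (fun V hV hVW m => hν V hV (disjoint_sdiff_left.mono_left hVW) y hy m) m
  refine ⟨k, hk, hky, fun A hA => ?_⟩
  by_cases hAν : A ∈ derivSeq f p ε ν
  · rw [hWc A fun h => h.2 hAν]
    exact reducesAt_of_correctAnswer (hf A ⟨hAν, hA⟩) hgy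
  · exact hW A ⟨hA, hAν⟩

lemma reducibleAtLevel_of_forall_lt (h : ∀ r < ν, ReducibleAtLevel f g p ε q δ r) :
    ReducibleAtLevel f g p ε q δ ν := by
  intro S hS hSν y hy m
  have hlocal : ∀ A, ∃ U ∈ 𝓝 A, ∃ k : Cantor → Cantor, Continuous k ∧
      ∀ B ∈ U, k B ∈ cylinder y m ∧ (B ∈ S → ReducesAt f g p ε q δ B (k B)) := by
    intro A
    by_cases hA : A ∈ S
    · obtain ⟨r, hr, U, hU, hAU, s, hs⟩ :=
        exists_oneSided_of_notMem_derivSeq (hSν.notMem_of_mem_left hA)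
      have hy' : y ∈ derivSeq g q δ (r + 1) :=
        antitone_derivSeq g q δ (Order.add_one_le_of_lt hr) hy
      obtain ⟨z, ⟨hz, hzy⟩, hgz⟩ :=
        (mem_derivSeq_add_one.1 hy').2 _ (isOpen_cylinder _ y m) (self_mem_cylinder y m) !s
      obtain ⟨k, hk, hkz, hred⟩ := (h r hr).exists_reduction_of_oneSided hU hs hz hgz m
      exact ⟨U, hU.mem_nhds hAU, k, hk, fun B hB =>
        ⟨mem_cylinder_iff_eq.1 hzy ▸ hkz B, fun _ => hred B hB⟩⟩
    · exact ⟨Sᶜ, hS.isOpen_compl.mem_nhds hA, fun _ => y, continuous_const,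
        fun B hB => ⟨self_mem_cylinder y m, fun h => absurd h hB⟩⟩
  obtain ⟨k, hk, hkΦ⟩ := Cantor.exists_continuous_of_forall_nhds
    (Φ := fun B z => z ∈ cylinder y m ∧ (B ∈ S → ReducesAt f g p ε q δ B z)) hlocal
  exact ⟨k, hk, fun A => (hkΦ A).1, fun A hA => (hkΦ A).2 hA⟩

lemma reducibleAtLevel (f g : Cantor → ℝ) (p ε q δ : ℚ) (ν : Ordinal.{0}) :
    ReducibleAtLevel f g p ε q δ ν := by
  induction ν using WellFoundedLT.induction with
  | _ ν ih => exact reducibleAtLevel_of_forall_lt ih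

end Reduction

lemma exists_isOpen_forall_lt_or_forall_gt_of_tendsto {X : Type*} [TopologicalSpace X]
    [BaireSpace X] [Nonempty X] {F : ℕ → X → ℝ} (hF : ∀ n, Continuous (F n)) {f : X → ℝ}
    (hFf : ∀ x, Tendsto (fun n => F n x) atTop (𝓝 (f x))) (c : ℝ) {ε : ℝ} (hε : 0 < ε) :
    ∃ U : Set X, IsOpen U ∧ U.Nonempty ∧ ((∀ x ∈ U, f x < c + ε) ∨ ∀ x ∈ U, c - ε < f x) := by
  let E : ℕ ⊕ ℕ → Set X := Sum.elim (fun N => ⋂ n ≥ N, {x | F n x ≤ c + ε / 2})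
    (fun N => ⋂ n ≥ N, {x | c - ε / 2 ≤ F n x})
  have hE : ∀ i, IsClosed (E i)
    | .inl _ => isClosed_biInter fun n _ => isClosed_le (hF n) continuous_const
    | .inr _ => isClosed_biInter fun n _ => isClosed_le continuous_const (hF n)
  have hcover : ⋃ i, E i = univ := by
    refine eq_univ_of_forall fun x => mem_iUnion.2 ?_
    rcases le_total (f x) c with hx | hx
    · obtain ⟨N, hN⟩ := eventually_atTop.1 ((hFf x).eventually (gt_mem_nhds
        (show f x < c + ε / 2 by linarith)))
      exact ⟨.inl N, mem_iInter₂.2 fun n hn => (hN n hn).le⟩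
    · obtain ⟨N, hN⟩ := eventually_atTop.1 ((hFf x).eventually (lt_mem_nhds
        (show c - ε / 2 < f x by linarith)))
      exact ⟨.inr N, mem_iInter₂.2 fun n hn => (hN n hn).le⟩
  obtain ⟨i, hi⟩ := nonempty_interior_of_iUnion_of_closed hE hcover
  refine ⟨interior (E i), isOpen_interior, hi, ?_⟩
  rcases i with N | N
  · refine .inl fun x hx => ?_
    have hN : ∀ n ≥ N, F n x ≤ c + ε / 2 := by simpa [E] using interior_subset hx
    have := le_of_tendsto (hFf x) (eventually_atTop.2 ⟨N, hN⟩)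
    linarith
  · refine .inr fun x hx => ?_
    have hN : ∀ n ≥ N, c - ε / 2 ≤ F n x := by simpa [E] using interior_subset hx
    have := ge_of_tendsto (hFf x) (eventually_atTop.2 ⟨N, hN⟩)
    linarith

section Rank

variable {f : Cantor → ℝ} {p ε : ℚ} {ν : Ordinal.{0}}

lemma exists_derivSeq_add_one_eq (f : Cantor → ℝ) (p ε : ℚ) :
    ∃ ν, derivSeq f p ε (ν + 1) = derivSeq f p ε ν := by
  obtain ⟨μ, ν, heq, hne⟩ : ∃ μ ν, derivSeq f p ε μ = derivSeq f p ε ν ∧ μ ≠ ν := by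
    simpa [Function.Injective] using not_injective_of_ordinal (derivSeq f p ε)
  wlog hlt : μ < ν generalizing μ ν
  · exact this ν μ heq.symm hne.symm (hne.lt_or_gt.resolve_left hlt)
  exact ⟨μ, (derivSeq_add_one_subset f p ε μ).antisymm
    (heq ▸ antitone_derivSeq f p ε (Order.add_one_le_of_lt hlt))⟩

/-- By Baire category on the compact set `P^ν`, `f` is one-sided on a nonempty relatively open
piece of it, which the next derivation step removes. -/
lemma derivSeq_eq_empty_of_add_one_eq (hf : BaireOne f) (hε : 0 < ε)
    (h : derivSeq f p ε (ν + 1) = derivSeq f p ε ν) : derivSeq f p ε ν = ∅ := by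
  set R := derivSeq f p ε ν
  by_contra hne
  have : Nonempty R := (nonempty_iff_ne_empty.2 hne).to_subtype
  have : CompactSpace R := isCompact_iff_compactSpace.1 (isClosed_derivSeq f p ε ν).isCompact
  obtain ⟨F, hF, hFf⟩ := hf
  obtain ⟨U, hU, ⟨x, hx⟩, hside⟩ := exists_isOpen_forall_lt_or_forall_gt_of_tendsto
    (fun n => (hF n).comp continuous_subtype_val) (fun x : R => hFf x) p (Rat.cast_pos.2 hε)
  obtain ⟨V, hV, rfl⟩ := isOpen_induced_iff.1 hU
  obtain ⟨s, hs⟩ : ∃ s, ∀ y ∈ R ∩ V, CorrectAnswer f y p ε s := by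
    rcases hside with hs | hs
    exacts [⟨true, fun y hy => by simpa using hs ⟨y, hy.1⟩ hy.2⟩,
      ⟨false, fun y hy => by simpa using hs ⟨y, hy.1⟩ hy.2⟩]
  have hx' : x.1 ∈ derivSeq f p ε (ν + 1) := h.symm ▸ x.2
  obtain ⟨y, hy, hys⟩ := (mem_derivSeq_add_one.1 hx').2 V hV hx s
  exact hys (hs y hy)

lemma derivSeq_bAlpha (hf : BaireOne f) (hε : 0 < ε) : derivSeq f p ε (bAlpha f p ε) = ∅ := by
  obtain ⟨ν, hν⟩ := exists_derivSeq_add_one_eq f p ε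
  exact csInf_mem (s := {ν | derivSeq f p ε ν = ∅})
    ⟨ν, derivSeq_eq_empty_of_add_one_eq hf hε hν⟩

lemma derivSeq_nonempty_of_lt_bAlpha (h : ν < bAlpha f p ε) : (derivSeq f p ε ν).Nonempty :=
  nonempty_iff_ne_empty.2 (notMem_of_lt_csInf' (s := {ν | derivSeq f p ε ν = ∅}) h)

/-- At a limit stage `P^ν` is a decreasing intersection of nonempty compact sets. -/
lemma not_isSuccLimit_bAlpha (hf : BaireOne f) (hε : 0 < ε) :
    ¬Order.IsSuccLimit (bAlpha f p ε) := by
  intro hlim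
  have : Nonempty {μ // μ < bAlpha f p ε} := ⟨⟨0, hlim.bot_lt⟩⟩
  have hne := IsCompact.nonempty_iInter_of_directed_nonempty_isCompact_isClosed
    (fun μ : {μ // μ < bAlpha f p ε} => derivSeq f p ε μ)
    ((antitone_derivSeq f p ε).comp_monotone (Subtype.mono_coe _)).directed_ge
    (fun μ => derivSeq_nonempty_of_lt_bAlpha μ.2)
    (fun μ => (isClosed_derivSeq f p ε μ).isCompact) (fun μ => isClosed_derivSeq f p ε μ)
  rw [← derivSeq_of_isSuccLimit f p ε hlim, derivSeq_bAlpha hf hε] at hne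
  exact not_nonempty_empty hne

lemma bAlpha_le_bourgainRank (hε : 0 < ε) : bAlpha f p ε ≤ bourgainRank f :=
  Ordinal.le_iSup _ (⟨p, ε, hε⟩ : ℚ × {ε : ℚ // 0 < ε})

lemma bAlpha_lt_bourgainRank (hf : BaireOne f) (hε : 0 < ε)
    (hlim : Order.IsSuccLimit (bourgainRank f)) : bAlpha f p ε < bourgainRank f :=
  (bAlpha_le_bourgainRank hε).lt_of_ne fun h => not_isSuccLimit_bAlpha hf hε (h ▸ hlim)

lemma exists_lt_bAlpha_of_lt_bourgainRank (h : ν < bourgainRank f) :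
    ∃ p ε, 0 < ε ∧ ν < bAlpha f p ε := by
  obtain ⟨⟨p, ε, hε⟩, h⟩ := Ordinal.lt_iSup_iff.1 h
  exact ⟨p, ε, hε, h⟩

end Rank

theorem mReducible_of_bourgainRank_eq_limit_general (f g : Cantor → ℝ) (hf : BaireOne f)
    (h : bourgainRank f = bourgainRank g)
    (hlim : Order.IsSuccLimit (bourgainRank f)) : MReducible f g := by
  intro p ε hε
  obtain ⟨q, δ, hδ, hlt⟩ :=
    exists_lt_bAlpha_of_lt_bourgainRank (h ▸ bAlpha_lt_bourgainRank hf hε hlim)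
  obtain ⟨y, hy⟩ := derivSeq_nonempty_of_lt_bAlpha hlt
  obtain ⟨k, hk, -, hred⟩ := reducibleAtLevel f g p ε q δ (bAlpha f p ε) univ isClosed_univ
    (by simp [derivSeq_bAlpha hf hε]) y hy 0
  exact ⟨q, δ, hδ, k, hk, fun A => hred A (mem_univ A)⟩

/-- If `f, g` are Baire 1 functions whose Bourgain ranks are equal to a common limit
ordinal, then `f ≤_m g`. -/
theorem mReducible_of_bourgainRank_eq_limit (f g : Cantor → ℝ) (hf : BaireOne f)
    (hg : BaireOne g) (h : bourgainRank f = bourgainRank g)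
    (hlim : Order.IsSuccLimit (bourgainRank f)) : MReducible f g :=
  mReducible_of_bourgainRank_eq_limit_general f g hf h hlim
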